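/- Let φ be a positive smooth function on a manifold and suppose smooth nowhere-zero functions V₁, V₂ satisfy both dV₂ = φ^{−1/3} dV₁ (projective compatibility) and V₂ = V₁/φ (Stäckel compatibility). Then φ(1 − φ^{2/3}) dV₁ = V₁ dφ, and consequently, wherever φ ≠ 1, V₁ = c·φ/(1 − φ^{2/3})^{3/2} for a locally constant c (on connected domains where 0 < φ < 1). -/

import Mathlib

noncomputable def pX (f : ℝ × ℝ → ℝ) : ℝ × ℝ → ℝ := fun p => deriv (fun t => f (t, p.2)) p.1
noncomputable def pY (f : ℝ × ℝ → ℝ) : ℝ × ℝ → ℝ := fun p => deriv (fun t => f (p.1, t)) p.2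

lemma line_lemma {u w v2 : ℝ → ℝ} {t₀ u' w' v' : ℝ}
    (hu : HasDerivAt u u' t₀) (hw : HasDerivAt w w' t₀) (hv : HasDerivAt v2 v' t₀)
    (hwpos : 0 < w t₀) (hwlt : w t₀ < 1)
    (heq : v2 =ᶠ[nhds t₀] fun t => u t / w t)
    (hp : v' = (w t₀) ^ (-(1:ℝ)/3) * u') :
    w t₀ * (1 - (w t₀) ^ ((2:ℝ)/3)) * u' = u t₀ * w' ∧
    HasDerivAt (fun t => u t * (1 - w t ^ ((2:ℝ)/3)) ^ ((3:ℝ)/2) / w t) 0 t₀ := by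
  set a := w t₀ with ha
  have hane : a ≠ 0 := hwpos.ne'
  have hA : a ^ ((2:ℝ)/3) < 1 := by
    calc a ^ ((2:ℝ)/3) < 1 ^ ((2:ℝ)/3) := by
          exact Real.rpow_lt_rpow hwpos.le hwlt (by norm_num)
      _ = 1 := Real.one_rpow _
  have hApos : 0 < a ^ ((2:ℝ)/3) := Real.rpow_pos_of_pos hwpos _
  have hs0 : (0:ℝ) < 1 - a ^ ((2:ℝ)/3) := by linarith
  have hq : HasDerivAt v2 ((u' * a - u t₀ * w') / a ^ 2) t₀ :=
    (hu.div hw hane).congr_of_eventuallyEq heq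
  have huniq : v' = (u' * a - u t₀ * w') / a ^ 2 := by
    have := hv.unique hq; linarith [this]
  have e1 : a ^ (-(1:ℝ)/3) * a ^ (2:ℕ) = a * a ^ ((2:ℝ)/3) := by
    rw [← Real.rpow_natCast a 2, ← Real.rpow_add hwpos]
    nth_rewrite 2 [← Real.rpow_one a]
    rw [← Real.rpow_add hwpos]
    norm_num
  have key : a * (1 - a ^ ((2:ℝ)/3)) * u' = u t₀ * w' := by
    rw [hp] at huniq
    field_simp at huniq
    rw [neg_div] at e1
    linear_combination u' * e1 - huniq
  refine ⟨key, ?_⟩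
  have h1 : HasDerivAt (fun t => w t ^ ((2:ℝ)/3)) (w' * ((2:ℝ)/3) * a ^ ((2:ℝ)/3 - 1)) t₀ :=
    hw.rpow_const (Or.inl hane)
  have h2 : HasDerivAt (fun t => 1 - w t ^ ((2:ℝ)/3)) (-(w' * ((2:ℝ)/3) * a ^ ((2:ℝ)/3 - 1))) t₀ :=
    h1.const_sub 1
  have h3 : HasDerivAt (fun t => (1 - w t ^ ((2:ℝ)/3)) ^ ((3:ℝ)/2))
      ((-(w' * ((2:ℝ)/3) * a ^ ((2:ℝ)/3 - 1))) * ((3:ℝ)/2) * (1 - a ^ ((2:ℝ)/3)) ^ ((3:ℝ)/2 - 1)) t₀ :=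
    h2.rpow_const (Or.inl hs0.ne')
  have h4 := (hu.mul h3).div hw hane
  refine h4.congr_deriv ?_
  simp only [Pi.mul_apply]
  rw [div_eq_zero_iff]
  left
  have i1 : a ^ ((2:ℝ)/3 - 1) = a ^ ((2:ℝ)/3) / a := by
    rw [Real.rpow_sub hwpos, Real.rpow_one]
  have i2 : (1 - a ^ ((2:ℝ)/3)) ^ ((3:ℝ)/2 - 1)
      = (1 - a ^ ((2:ℝ)/3)) ^ ((3:ℝ)/2) / (1 - a ^ ((2:ℝ)/3)) := by
    rw [Real.rpow_sub hs0, Real.rpow_one]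
  rw [i1, i2]
  simp only [← ha]
  have hS : (0:ℝ) < (1 - a ^ ((2:ℝ)/3)) ^ ((3:ℝ)/2) := Real.rpow_pos_of_pos hs0 _
  field_simp
  linear_combination ((1 - a^((2:ℝ)/3))^((3:ℝ)/2)) * key

lemma const_on_conn {f : ℝ × ℝ → ℝ} {s : Set (ℝ × ℝ)} (hs : IsOpen s)
    (hc : IsPreconnected s) (hf : ∀ p ∈ s, HasFDerivAt f (0 : (ℝ × ℝ) →L[ℝ] ℝ) p)
    {x y : ℝ × ℝ} (hx : x ∈ s) (hy : y ∈ s) : f x = f y := by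
  have hball : ∀ p ∈ s, ∀ q ∈ s, ∀ ε, Metric.ball p ε ⊆ s → q ∈ Metric.ball p ε → f q = f p := by
    intro p hp q hq ε hb hqb
    refine (convex_ball p ε).is_const_of_fderivWithin_eq_zero
      (fun z hz => ((hf z (hb hz)).differentiableAt).differentiableWithinAt)
      (fun z hz => ?_) hqb (Metric.mem_ball_self ?_)
    · exact ((hf z (hb hz)).hasFDerivWithinAt.fderivWithin (Metric.isOpen_ball.uniqueDiffWithinAt hz))
    · exact dist_nonneg.trans_lt (Metric.mem_ball.mp hqb)
  set T : Set (ℝ × ℝ) := {p | p ∈ s ∧ f p = f x} with hT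
  set T' : Set (ℝ × ℝ) := {p | p ∈ s ∧ f p ≠ f x} with hT'
  have openaux : ∀ p ∈ s, ∃ ε > 0, Metric.ball p ε ⊆ s ∧ ∀ q ∈ Metric.ball p ε, f q = f p := by
    intro p hp
    obtain ⟨ε, hε, hb⟩ := Metric.isOpen_iff.mp hs p hp
    exact ⟨ε, hε, hb, fun q hq => hball p hp q (hb hq) ε hb hq⟩
  have hTo : IsOpen T := by
    rw [Metric.isOpen_iff]
    rintro p ⟨hp, hfp⟩
    obtain ⟨ε, hε, hb, hconst⟩ := openaux p hp
    exact ⟨ε, hε, fun q hq => ⟨hb hq, (hconst q hq).trans hfp⟩⟩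
  have hT'o : IsOpen T' := by
    rw [Metric.isOpen_iff]
    rintro p ⟨hp, hfp⟩
    obtain ⟨ε, hε, hb, hconst⟩ := openaux p hp
    exact ⟨ε, hε, fun q hq => ⟨hb hq, (hconst q hq).symm ▸ hfp⟩⟩
  by_contra hne
  obtain ⟨z, hz⟩ := hc T T' hTo hT'o
    (fun p hp => by by_cases h : f p = f x; exacts [Or.inl ⟨hp, h⟩, Or.inr ⟨hp, h⟩])
    ⟨x, hx, hx, rfl⟩ ⟨y, hy, hy, fun h => hne h.symm⟩
  exact hz.2.2.2 hz.2.1.2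

/-- if V₂ is both projectively compatible (dV₂ = φ^{-1/3} dV₁)
and Stäckel compatible (V₂ = V₁/φ) with V₁, where 0 < φ < 1 and V₁ is nowhere
zero on a connected open domain Ω, then φ(1 − φ^{2/3}) dV₁ = V₁ dφ, and
V₁ = c·φ/(1 − φ^{2/3})^{3/2} for a constant c on Ω. -/
theorem stmt_8 (Ω : Set (ℝ × ℝ)) (hΩ : IsOpen Ω) (hconn : IsConnected Ω)
    (φ V1 V2 : ℝ × ℝ → ℝ)
    (hφd : ContDiffOn ℝ (⊤ : ℕ∞) φ Ω) (hV1d : ContDiffOn ℝ (⊤ : ℕ∞) V1 Ω)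
    (hV2d : ContDiffOn ℝ (⊤ : ℕ∞) V2 Ω)
    (hφ : ∀ p ∈ Ω, 0 < φ p ∧ φ p < 1)
    (hV1 : ∀ p ∈ Ω, V1 p ≠ 0)
    (hproj : ∀ p ∈ Ω, pX V2 p = (φ p) ^ (-(1 : ℝ) / 3) * pX V1 p ∧
                       pY V2 p = (φ p) ^ (-(1 : ℝ) / 3) * pY V1 p)
    (hstae : ∀ p ∈ Ω, V2 p = V1 p / φ p) :
    (∀ p ∈ Ω, φ p * (1 - (φ p) ^ ((2 : ℝ) / 3)) * pX V1 p = V1 p * pX φ p ∧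
              φ p * (1 - (φ p) ^ ((2 : ℝ) / 3)) * pY V1 p = V1 p * pY φ p) ∧
    ∃ c : ℝ, ∀ p ∈ Ω, V1 p = c * φ p / (1 - (φ p) ^ ((2 : ℝ) / 3)) ^ ((3 : ℝ) / 2) := by
  set F : ℝ × ℝ → ℝ := fun q => V1 q * (1 - φ q ^ ((2:ℝ)/3)) ^ ((3:ℝ)/2) / φ q with hF
  have main : ∀ p ∈ Ω,
      (φ p * (1 - (φ p) ^ ((2 : ℝ) / 3)) * pX V1 p = V1 p * pX φ p ∧
       φ p * (1 - (φ p) ^ ((2 : ℝ) / 3)) * pY V1 p = V1 p * pY φ p) ∧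
      HasFDerivAt F (0 : (ℝ × ℝ) →L[ℝ] ℝ) p := by
    intro p hp
    have hΩn : Ω ∈ nhds p := hΩ.mem_nhds hp
    have dV1 : DifferentiableAt ℝ V1 p := (hV1d.contDiffAt hΩn).differentiableAt (by simp)
    have dV2 : DifferentiableAt ℝ V2 p := (hV2d.contDiffAt hΩn).differentiableAt (by simp)
    have dφ : DifferentiableAt ℝ φ p := (hφd.contDiffAt hΩn).differentiableAt (by simp)
    have hφpos := (hφ p hp).1
    have hφlt := (hφ p hp).2
    have hApos : 0 < φ p ^ ((2:ℝ)/3) := Real.rpow_pos_of_pos hφpos _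
    have hAlt : φ p ^ ((2:ℝ)/3) < 1 := by
      calc φ p ^ ((2:ℝ)/3) < 1 ^ ((2:ℝ)/3) := Real.rpow_lt_rpow hφpos.le hφlt (by norm_num)
        _ = 1 := Real.one_rpow _
    have hs0 : (0:ℝ) < 1 - φ p ^ ((2:ℝ)/3) := by linarith
    -- X direction
    have hlX : HasDerivAt (fun t : ℝ => (t, p.2)) ((1:ℝ), (0:ℝ)) p.1 :=
      (hasDerivAt_id p.1).prodMk (hasDerivAt_const p.1 p.2)
    have hlY : HasDerivAt (fun t : ℝ => (p.1, t)) ((0:ℝ), (1:ℝ)) p.2 :=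
      (hasDerivAt_const p.2 p.1).prodMk (hasDerivAt_id p.2)
    have huX : HasDerivAt (fun t => V1 (t, p.2)) (pX V1 p) p.1 := by
      have h := (dV1.hasFDerivAt.comp_hasDerivAt p.1 hlX).differentiableAt
      simpa [pX, Function.comp_def] using h.hasDerivAt
    have hwX : HasDerivAt (fun t => φ (t, p.2)) (pX φ p) p.1 := by
      have h := (dφ.hasFDerivAt.comp_hasDerivAt p.1 hlX).differentiableAt
      simpa [pX, Function.comp_def] using h.hasDerivAt
    have hvX : HasDerivAt (fun t => V2 (t, p.2)) (pX V2 p) p.1 := by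
      have h := (dV2.hasFDerivAt.comp_hasDerivAt p.1 hlX).differentiableAt
      simpa [pX, Function.comp_def] using h.hasDerivAt
    have huY : HasDerivAt (fun t => V1 (p.1, t)) (pY V1 p) p.2 := by
      have h := (dV1.hasFDerivAt.comp_hasDerivAt p.2 hlY).differentiableAt
      simpa [pY, Function.comp_def] using h.hasDerivAt
    have hwY : HasDerivAt (fun t => φ (p.1, t)) (pY φ p) p.2 := by
      have h := (dφ.hasFDerivAt.comp_hasDerivAt p.2 hlY).differentiableAt
      simpa [pY, Function.comp_def] using h.hasDerivAt
    have hvY : HasDerivAt (fun t => V2 (p.1, t)) (pY V2 p) p.2 := by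
      have h := (dV2.hasFDerivAt.comp_hasDerivAt p.2 hlY).differentiableAt
      simpa [pY, Function.comp_def] using h.hasDerivAt
    have hmemX : ∀ᶠ t in nhds p.1, (t, p.2) ∈ Ω := by
      have hc : Continuous (fun t : ℝ => (t, p.2)) := by continuity
      exact hc.continuousAt.preimage_mem_nhds (by simpa using hΩn)
    have hmemY : ∀ᶠ t in nhds p.2, (p.1, t) ∈ Ω := by
      have hc : Continuous (fun t : ℝ => (p.1, t)) := by continuity
      exact hc.continuousAt.preimage_mem_nhds (by simpa using hΩn)
    have heqX : (fun t => V2 (t, p.2)) =ᶠ[nhds p.1] fun t => V1 (t, p.2) / φ (t, p.2) :=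
      hmemX.mono fun t ht => hstae _ ht
    have heqY : (fun t => V2 (p.1, t)) =ᶠ[nhds p.2] fun t => V1 (p.1, t) / φ (p.1, t) :=
      hmemY.mono fun t ht => hstae _ ht
    have LX := line_lemma huX hwX hvX hφpos hφlt heqX (hproj p hp).1
    have LY := line_lemma huY hwY hvY hφpos hφlt heqY (hproj p hp).2
    refine ⟨⟨LX.1, LY.1⟩, ?_⟩
    -- F is differentiable at p
    have dF : DifferentiableAt ℝ F p := by
      have d1 : DifferentiableAt ℝ (fun q => φ q ^ ((2:ℝ)/3)) p :=
        dφ.rpow_const (Or.inl hφpos.ne')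
      have d2 : DifferentiableAt ℝ (fun q => 1 - φ q ^ ((2:ℝ)/3)) p :=
        (differentiableAt_const (1:ℝ)).sub d1
      have d3 : DifferentiableAt ℝ (fun q => (1 - φ q ^ ((2:ℝ)/3)) ^ ((3:ℝ)/2)) p :=
        d2.rpow_const (Or.inl hs0.ne')
      have hmi : DifferentiableAt ℝ
          (fun q => V1 q * (1 - φ q ^ ((2:ℝ)/3)) ^ ((3:ℝ)/2) * (φ q)⁻¹) p :=
        (dV1.mul d3).mul (dφ.inv hφpos.ne')
      simpa [hF, div_eq_mul_inv] using hmi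
    set L := fderiv ℝ F p with hL
    have hcX : HasDerivAt (fun t => F (t, p.2)) (L (1, 0)) p.1 :=
      (dF.hasFDerivAt.comp_hasDerivAt p.1 hlX :)
    have hcY : HasDerivAt (fun t => F (p.1, t)) (L (0, 1)) p.2 :=
      (dF.hasFDerivAt.comp_hasDerivAt p.2 hlY :)
    have hX0 : L (1, 0) = 0 := hcX.unique LX.2
    have hY0 : L (0, 1) = 0 := hcY.unique LY.2
    have hL0 : L = 0 := by
      refine ContinuousLinearMap.ext fun v => ?_
      have hv : v = v.1 • ((1:ℝ), (0:ℝ)) + v.2 • ((0:ℝ), (1:ℝ)) := by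
        ext <;> simp
      rw [hv, map_add, map_smul, map_smul, hX0, hY0]
      simp
    exact hL0 ▸ dF.hasFDerivAt
  refine ⟨fun p hp => (main p hp).1, ?_⟩
  obtain ⟨p₀, hp₀⟩ := hconn.nonempty
  refine ⟨F p₀, fun p hp => ?_⟩
  have hc : F p = F p₀ :=
    const_on_conn hΩ hconn.isPreconnected (fun q hq => (main q hq).2) hp hp₀
  have hφpos := (hφ p hp).1
  have hAlt : φ p ^ ((2:ℝ)/3) < 1 := by
    calc φ p ^ ((2:ℝ)/3) < 1 ^ ((2:ℝ)/3) :=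
          Real.rpow_lt_rpow hφpos.le (hφ p hp).2 (by norm_num)
      _ = 1 := Real.one_rpow _
  have hs0 : (0:ℝ) < 1 - φ p ^ ((2:ℝ)/3) := by linarith
  have hS : (0:ℝ) < (1 - φ p ^ ((2:ℝ)/3)) ^ ((3:ℝ)/2) := Real.rpow_pos_of_pos hs0 _
  have hFp : V1 p * (1 - φ p ^ ((2:ℝ)/3)) ^ ((3:ℝ)/2) / φ p = F p₀ := hc
  field_simp at hFp ⊢
  linear_combination hFp
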